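/- Let d ≥ n and let λ ∈ Xf be d-deep in a p-restricted p-alcove. Then for every s ∈ Wf and every pair (s′, μ′) ∈ Wf × Xf with μ′ lying in C₀ (i.e. 0 < ⟨μ′_j + η₀, α^∨⟩ < p for all j and positive coroots) and (s′, μ′ + η) ∼ (s, w̃_h · λ + η), the weight μ′ is (d − n + 1)-deep in C₀. In particular the tame inertial type τ(s, w̃_h · λ + η) is at least (d − n + 1)-generic. -/

import Mathlib

/-!
Common setup: the extended affine Weyl group of `GL_n` (f-fold product), its dot
action on `(ℝ^n)^f`, p-alcoves, lengths, Bruhat orders (dominant and antidominant),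
the up (↑) order, admissible sets, and the combinatorics of lowest alcove
presentations, following Le–Le Hung–Levin, "Weight elimination in Serre-type
conjectures".
-/

noncomputable section

namespace LLLSerre

open scoped BigOperators

/-- `η₀ = (n-1, n-2, …, 1, 0)`. -/
def eta0 (n : ℕ) : Fin n → ℤ := fun i => (n : ℤ) - 1 - (i : ℤ)

/-- The action of a permutation on a vector: `(σ x) i = x (σ⁻¹ i)`. -/
def permAct {n : ℕ} {α : Type*} (σ : Equiv.Perm (Fin n)) (x : Fin n → α) : Fin n → α :=
  fun i => x (σ⁻¹ i)

/-- The weight lattice `Xf = (ℤ^n)^f`. -/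
abbrev Xf (n f : ℕ) := Fin f → Fin n → ℤ

/-- The f-fold product of Weyl groups `Wf = (S_n)^f`. -/
abbrev WfG (n f : ℕ) := Fin f → Equiv.Perm (Fin n)

/-- Points of `(ℝ^n)^f`. -/
abbrev RPt (n f : ℕ) := Fin f → Fin n → ℝ

/-- The extended affine Weyl group `Wtf = (X ⋊ W)^f`; the pair `(w, ν)` represents
`w t_ν`. -/
structure Wtf (n f : ℕ) where
  w : WfG n f
  t : Xf n f

/-- Multiplication in `Wtf`: `(w₁ t_{ν₁})(w₂ t_{ν₂}) = w₁w₂ t_{ν₂ + w₂⁻¹(ν₁)}`. -/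
def Wtf.mul {n f : ℕ} (a b : Wtf n f) : Wtf n f :=
  ⟨fun j => a.w j * b.w j, fun j => b.t j + permAct (b.w j)⁻¹ (a.t j)⟩

/-- Inversion in `Wtf`: `(w t_ν)⁻¹ = w⁻¹ t_{-w(ν)}`. -/
def Wtf.inv {n f : ℕ} (a : Wtf n f) : Wtf n f :=
  ⟨fun j => (a.w j)⁻¹, fun j => -(permAct (a.w j) (a.t j))⟩

/-- Embedding of the finite Weyl group `Wf` in `Wtf`. -/
def ofW {n f : ℕ} (w : WfG n f) : Wtf n f := ⟨w, fun _ _ => 0⟩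

/-- The translation `t_ν ∈ Wtf`. -/
def transl {n f : ℕ} (ν : Xf n f) : Wtf n f := ⟨fun _ => 1, ν⟩

/-- `η = (η₀, …, η₀) ∈ Xf`. -/
def etaf (n f : ℕ) : Xf n f := fun _ => eta0 n

/-- The longest element `w₀ ∈ Wf`. -/
def w0f (n f : ℕ) : WfG n f := fun _ => Fin.revPerm

/-- `w₀` as an element of `Wtf`. -/
def w0Elt (n f : ℕ) : Wtf n f := ofW (w0f n f)

/-- `w̃_h = w₀ t_{-η} ∈ Wtf`. -/
def whElt (n f : ℕ) : Wtf n f := ⟨w0f n f, fun _ i => -(eta0 n i)⟩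

/-- The dot action of `Wtf` on `(ℝ^n)^f`: `(w t_ν) · x = w(x + η + pν) − η`. -/
def dotR {n f : ℕ} (p : ℕ) (a : Wtf n f) (x : RPt n f) : RPt n f :=
  fun j i =>
    (x j ((a.w j)⁻¹ i) + ((eta0 n ((a.w j)⁻¹ i) : ℤ) : ℝ)
      + (p : ℝ) * ((a.t j ((a.w j)⁻¹ i) : ℤ) : ℝ)) - ((eta0 n i : ℤ) : ℝ)

/-- The dot action of `Wtf` on integral weights. -/
def dotZ {n f : ℕ} (p : ℕ) (a : Wtf n f) (lam : Xf n f) : Xf n f :=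
  fun j i =>
    (lam j ((a.w j)⁻¹ i) + eta0 n ((a.w j)⁻¹ i) + (p : ℤ) * a.t j ((a.w j)⁻¹ i)) - eta0 n i

/-- `⟨x_j + η₀, α_{ik}^∨⟩` for a real point `x`. -/
def prR {n f : ℕ} (x : RPt n f) (j : Fin f) (i k : Fin n) : ℝ :=
  (x j i + ((eta0 n i : ℤ) : ℝ)) - (x j k + ((eta0 n k : ℤ) : ℝ))

/-- `⟨λ_j + η₀, α_{ik}^∨⟩` for a weight `λ`. -/
def prZ {n f : ℕ} (lam : Xf n f) (j : Fin f) (i k : Fin n) : ℤ :=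
  (lam j i + eta0 n i) - (lam j k + eta0 n k)

/-- A point is (p-)regular if it lies on none of the affine hyperplanes
`⟨x_j + η₀, α^∨⟩ = pm`. -/
def regular {n f : ℕ} (p : ℕ) (x : RPt n f) : Prop :=
  ∀ (j : Fin f) (i k : Fin n) (m : ℤ), i < k → prR x j i k ≠ (p : ℝ) * (m : ℝ)

/-- Two regular points lie in the same p-alcove (same side of every hyperplane). -/
def sameAlcove {n f : ℕ} (p : ℕ) (x y : RPt n f) : Prop :=
  regular p x ∧ regular p y ∧
    ∀ (j : Fin f) (i k : Fin n) (m : ℤ), i < k →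
      (prR x j i k < (p : ℝ) * (m : ℝ) ↔ prR y j i k < (p : ℝ) * (m : ℝ))

/-- The root `α_{ik} = e_i - e_k` as a real vector. -/
def rootR {n : ℕ} (i k i' : Fin n) : ℝ :=
  (if i' = i then (1 : ℝ) else 0) - (if i' = k then (1 : ℝ) else 0)

/-- The affine reflection across the hyperplane `⟨x_j + η₀, α_{ik}^∨⟩ = pm`:
it replaces `x_j` by `x_j − (⟨x_j + η₀, α_{ik}^∨⟩ − pm) α_{ik}`. -/
def reflPt {n f : ℕ} (p : ℕ) (j : Fin f) (i k : Fin n) (m : ℤ) (x : RPt n f) : RPt n f :=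
  fun j' i' =>
    if j' = j then x j' i' - (prR x j i k - (p : ℝ) * (m : ℝ)) * rootR i k i' else x j' i'

/-- The origin, a point of the base alcove `C₀` (when `p > n`). -/
def basePt (n f : ℕ) : RPt n f := fun _ _ => 0

/-- The hyperplane indexed by `(j, i, k, m)` separates `x` from `y`. -/
def separates {n f : ℕ} (p : ℕ) (x y : RPt n f) (j : Fin f) (i k : Fin n) (m : ℤ) : Prop :=
  (prR x j i k < (p : ℝ) * (m : ℝ) ∧ (p : ℝ) * (m : ℝ) < prR y j i k) ∨
  (prR y j i k < (p : ℝ) * (m : ℝ) ∧ (p : ℝ) * (m : ℝ) < prR x j i k)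

/-- The length of `a ∈ Wtf` measured from the alcove of the base point `x`:
the number of hyperplanes separating the alcove of `x` from its image under `a`. -/
def lenFrom {n f : ℕ} (p : ℕ) (x : RPt n f) (a : Wtf n f) : ℕ :=
  Set.ncard {q : Fin f × Fin n × Fin n × ℤ |
    q.2.1 < q.2.2.1 ∧ separates p x (dotR p a x) q.1 q.2.1 q.2.2.1 q.2.2.2}

/-- Length relative to the dominant base alcove `C₀`. -/
def len {n f : ℕ} (p : ℕ) (a : Wtf n f) : ℕ := lenFrom p (basePt n f) a

/-- A point of the antidominant base alcove `w₀ · C₀`. -/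
def antiBasePt (n f p : ℕ) : RPt n f := dotR p (w0Elt n f) (basePt n f)

/-- Length relative to the antidominant base alcove `w₀ · C₀`. -/
def lenV {n f : ℕ} (p : ℕ) (a : Wtf n f) : ℕ := lenFrom p (antiBasePt n f p) a

/-- The affine Weyl group `Waf = (Λ_R ⋊ W)^f ⊆ Wtf`. -/
def Waf (n f : ℕ) : Set (Wtf n f) := {a | ∀ j, (∑ i, a.t j i) = 0}

/-- The stabilizer `Ωf` of the dominant base alcove `C₀`. -/
def Omegaf (n f p : ℕ) : Set (Wtf n f) :=
  {a | sameAlcove p (basePt n f) (dotR p a (basePt n f))}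

/-- The stabilizer of the antidominant base alcove `w₀ · C₀`. -/
def OmegaV (n f p : ℕ) : Set (Wtf n f) :=
  {a | sameAlcove p (antiBasePt n f p) (dotR p a (antiBasePt n f p))}

/-- `a ∈ Wtf` acts via the dot action as the affine reflection in a single hyperplane. -/
def isRefl {n f : ℕ} (p : ℕ) (a : Wtf n f) : Prop :=
  ∃ (j : Fin f) (i k : Fin n) (m : ℤ), i < k ∧ ∀ x, dotR p a x = reflPt p j i k m x

/-- One step of the Bruhat order (relative to the base point `x`):
`u < r u` for `r` a reflection with `ℓ(u) < ℓ(r u)`. -/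
def bruhatStepFrom {n f : ℕ} (p : ℕ) (x : RPt n f) (u v : Wtf n f) : Prop :=
  ∃ r, isRefl p r ∧ v = Wtf.mul r u ∧ lenFrom p x u < lenFrom p x v

/-- The Bruhat order on `Wtf` relative to the base alcove with representative
point `x` and stabilizer `Ω`: on `Waf` it is generated by the reflection steps,
and is extended to `Wtf` by `u ω ≤ v ω` for `u ≤ v` in `Waf`, `ω ∈ Ω`. -/
def bruhatLEFrom {n f : ℕ} (p : ℕ) (x : RPt n f) (Om : Set (Wtf n f)) (a b : Wtf n f) : Prop :=
  ∃ u v ω, u ∈ Waf n f ∧ v ∈ Waf n f ∧ ω ∈ Om ∧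
    a = Wtf.mul u ω ∧ b = Wtf.mul v ω ∧
    Relation.ReflTransGen (bruhatStepFrom p x) u v

/-- The Bruhat order on `Wtf` relative to the dominant base alcove. -/
def bruhatLE {n f : ℕ} (p : ℕ) (a b : Wtf n f) : Prop :=
  bruhatLEFrom p (basePt n f) (Omegaf n f p) a b

/-- The Bruhat order on `Wtf` relative to the antidominant base alcove. -/
def bruhatLEV {n f : ℕ} (p : ℕ) (a b : Wtf n f) : Prop :=
  bruhatLEFrom p (antiBasePt n f p) (OmegaV n f p) a b

/-- The admissible set `Adm(λ) = {w̃ : w̃ ≤ t_{σ(λ)} for some σ ∈ Wf}` (dominant order). -/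
def Adm {n f : ℕ} (p : ℕ) (lam : Xf n f) : Set (Wtf n f) :=
  {a | ∃ σ : WfG n f, bruhatLE p a (transl (fun j => permAct (σ j) (lam j)))}

/-- The admissible set `Adm∨(λ)` (antidominant order). -/
def AdmV {n f : ℕ} (p : ℕ) (lam : Xf n f) : Set (Wtf n f) :=
  {a | ∃ σ : WfG n f, bruhatLEV p a (transl (fun j => permAct (σ j) (lam j)))}

/-- The anti-automorphism `w̃ = w t_ν ↦ w̃* = t_{ν*} w*` of `Wtf`, where
`(w*)_j = (w_{f-1-j})⁻¹` and `(ν*)_j = ν_{f-1-j}`. -/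
def wstar {n f : ℕ} (a : Wtf n f) : Wtf n f :=
  ⟨fun j => (a.w (Fin.rev j))⁻¹, fun j => permAct (a.w (Fin.rev j)) (a.t (Fin.rev j))⟩

/-- `ν ↦ ν*` on weights: `(ν*)_j = ν_{f-1-j}`. -/
def xstar {n f : ℕ} (lam : Xf n f) : Xf n f := fun j => lam (Fin.rev j)

/-- The cyclic shift `π` on weights: `(πν)_j = ν_{j-1}`. -/
def sh {n f : ℕ} (ν : Xf n f) : Xf n f := fun j => ν ((finRotate f)⁻¹ j)

/-- The cyclic shift `π` on `Wf`: `(πσ)_j = σ_{j-1}`. -/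
def shW {n f : ℕ} (σ : WfG n f) : WfG n f := fun j => σ ((finRotate f)⁻¹ j)

/-- The `Wf`-part of `^(ν,σ)(w, μ)`, namely `σ w π(σ)⁻¹`. -/
def conjW {n f : ℕ} (σ w : WfG n f) : WfG n f := fun j => σ j * w j * (shW σ j)⁻¹

/-- The `Xf`-part of `^(ν,σ)(w, μ)`, namely `σ(μ) + pν − σwπ(σ)⁻¹ π(ν)`. -/
def conjX {n f : ℕ} (p : ℕ) (ν : Xf n f) (σ w : WfG n f) (μ : Xf n f) : Xf n f :=
  fun j i => permAct (σ j) (μ j) i + (p : ℤ) * ν j i - permAct (conjW σ w j) (sh ν j) i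

/-- `(w, μ) ∼ (w', μ')`: `(w', μ') = ^(ν,σ)(w, μ)` for some `(ν, σ)`. -/
def pairEquiv {n f : ℕ} (p : ℕ) (w : WfG n f) (μ : Xf n f) (w' : WfG n f) (μ' : Xf n f) : Prop :=
  ∃ (ν : Xf n f) (σ : WfG n f), w' = conjW σ w ∧ μ' = conjX p ν σ w μ

/-- `λ` is m-deep in the base alcove `C₀`:
`m < ⟨λ_j + η₀, α^∨⟩ < p − m` for all `j` and positive coroots `α^∨`. -/
def deep {n f : ℕ} (p m : ℕ) (lam : Xf n f) : Prop :=
  ∀ (j : Fin f) (i k : Fin n), i < k →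
    (m : ℤ) < prZ lam j i k ∧ prZ lam j i k < (p : ℤ) - (m : ℤ)

/-- `λ` lies m-deep in its own p-alcove. -/
def deepInAlcove {n f : ℕ} (p m : ℕ) (lam : Xf n f) : Prop :=
  ∀ (j : Fin f) (i k : Fin n), i < k →
    ∃ N : ℤ, (p : ℤ) * N + (m : ℤ) < prZ lam j i k ∧
      prZ lam j i k < (p : ℤ) * (N + 1) - (m : ℤ)

/-- The p-restricted weights `X₁`. -/
def X1 (n f p : ℕ) : Set (Xf n f) :=
  {lam | ∀ (j : Fin f) (i : Fin n) (h : (i : ℕ) + 1 < n),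
    0 ≤ lam j i - lam j ⟨(i : ℕ) + 1, h⟩ ∧ lam j i - lam j ⟨(i : ℕ) + 1, h⟩ ≤ (p : ℤ) - 1}

/-- `X⁰`: weights pairing to 0 with every coroot. -/
def X0 (n f : ℕ) : Set (Xf n f) := {lam | ∀ (j : Fin f) (i k : Fin n), lam j i = lam j k}

/-- The alcove of the regular point `x` is dominant. -/
def dominantPt {n f : ℕ} (x : RPt n f) : Prop :=
  ∀ (j : Fin f) (i k : Fin n), i < k → 0 < prR x j i k

/-- The alcove of the regular point `x` is p-restricted. -/
def restrictedPt {n f : ℕ} (p : ℕ) (x : RPt n f) : Prop :=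
  ∀ (j : Fin f) (i : Fin n) (h : (i : ℕ) + 1 < n),
    0 < prR x j i ⟨(i : ℕ) + 1, h⟩ ∧ prR x j i ⟨(i : ℕ) + 1, h⟩ < (p : ℝ)

/-- `Wtf⁺`: the elements sending `C₀` to a dominant alcove under the dot action. -/
def WtfPlus (n f p : ℕ) : Set (Wtf n f) := {a | dominantPt (dotR p a (basePt n f))}

/-- One step of the up (↑) order on alcoves, via representative points:
stay in the same alcove, or apply a reflection across a hyperplane lying above. -/
def upStep {n f : ℕ} (p : ℕ) (x y : RPt n f) : Prop :=
  sameAlcove p x y ∨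
    ∃ (j : Fin f) (i k : Fin n) (m : ℤ), i < k ∧ prR x j i k < (p : ℝ) * (m : ℝ) ∧
      y = reflPt p j i k m x

/-- The up (↑) order on p-alcoves, via representative points. -/
def alcoveLE {n f : ℕ} (p : ℕ) (x y : RPt n f) : Prop :=
  Relation.ReflTransGen (upStep p) x y

/-- `w̃₁ ↑ w̃₂` on `Wtf`: `w̃₁ · C₀ ↑ w̃₂ · C₀` and `w̃₁, w̃₂` in the same right
`Waf`-coset. -/
def upOrd {n f : ℕ} (p : ℕ) (a b : Wtf n f) : Prop :=
  alcoveLE p (dotR p a (basePt n f)) (dotR p b (basePt n f)) ∧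
    Wtf.mul a (Wtf.inv b) ∈ Waf n f

/-- Realification of an integral weight. -/
def toR {n f : ℕ} (lam : Xf n f) : RPt n f := fun j i => ((lam j i : ℤ) : ℝ)

/-- The `Wf`-orbit of a point of `(ℝ^n)^f`. -/
def orbitR {n f : ℕ} (y : RPt n f) : Set (RPt n f) :=
  Set.range fun σ : WfG n f => fun j => permAct (σ j) (y j)

end LLLSerre

/-!
The relation `(s', μ' + η) ∼ (s, w̃_h · λ + η)` says that, coordinatewise,
`⟨μ'_j + η₀, α^∨⟩ ≡ ⟨λ_j + η₀, β^∨⟩ − ⟨(πν)_j, γ^∨⟩ (mod p)` for suitable roots `β, γ`,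
where `ν` is the translation part of the conjugating element. Since the simple pairings of
`λ + η` lie in `(d, p − d)`, the pairings of `w̃_h · λ + η` are within `(n − 1)(p − d − 1)`
of `0`; comparing the equation at the place where `ν` is most spread out then shows that
every `ν_j` has spread at most `n − 1`. The congruence therefore perturbs the `d`-deep
residue of `⟨λ_j + η₀, β^∨⟩` by at most `n − 1`, and as `⟨μ'_j + η₀, α^∨⟩ ∈ (0, p)` the
congruence is an equality.
-/

namespace LLLSerre

section Pairings

variable {n f : ℕ}

theorem prZ_add_prZ (lam : Xf n f) (j : Fin f) (a b c : Fin n) :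
    prZ lam j a b + prZ lam j b c = prZ lam j a c := by
  simp only [prZ]; ring

theorem prZ_swap (lam : Xf n f) (j : Fin f) (a b : Fin n) :
    prZ lam j a b = -prZ lam j b a := by
  simp only [prZ]; ring

theorem eta0_sub_eta0 (a b : Fin n) : eta0 n a - eta0 n b = (b : ℤ) - a := by
  simp only [eta0]; ring

theorem abs_prZ_le_of_deep {p m : ℕ} {μ : Xf n f} (h : deep p m μ) (hm : m < p)
    (j : Fin f) (a b : Fin n) : |prZ μ j a b| ≤ p - 1 - m := by
  rcases lt_trichotomy a b with hab | rfl | hab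
  · have := h j a b hab
    rw [abs_le]; constructor <;> omega
  · simp only [prZ, sub_self, abs_zero]; omega
  · have := h j b a hab
    rw [prZ_swap, abs_neg, abs_le]; constructor <;> omega

end Pairings

namespace deepInAlcove

variable {n f p d : ℕ} {lam : Xf n f}

theorem exists_deep_residue (h : deepInAlcove p d lam) (j : Fin f) {a b : Fin n} (hab : a ≠ b) :
    ∃ M : ℤ, d < prZ lam j a b - p * M ∧ prZ lam j a b - p * M < p - d := by
  rcases hab.lt_or_gt with hab | hab
  · obtain ⟨N, h₁, h₂⟩ := h j a b hab
    exact ⟨N, by linarith, by linarith⟩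
  · obtain ⟨N, h₁, h₂⟩ := h j b a hab
    refine ⟨-(N + 1), ?_, ?_⟩ <;> rw [prZ_swap] <;> linarith

theorem bounds_of_pos_of_lt (h : deepInAlcove p d lam) (j : Fin f) {a b : Fin n} (hab : a < b)
    (h₀ : 0 < prZ lam j a b) (hp : prZ lam j a b < p) :
    d < prZ lam j a b ∧ prZ lam j a b < p - d := by
  obtain ⟨N, h₁, h₂⟩ := h j a b hab
  have hN₁ : N < 1 := lt_of_mul_lt_mul_left (a := (p : ℤ)) (by linarith) (by positivity)
  have hN₀ : 0 < N + 1 := lt_of_mul_lt_mul_left (a := (p : ℤ)) (by linarith) (by positivity)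
  obtain rfl : N = 0 := by omega
  constructor <;> linarith

end deepInAlcove

section SimpleRoots

variable {n f p d : ℕ} {lam : Xf n f} {j : Fin f}

theorem abs_prZ_sub_le_of_succ
    (hsucc : ∀ (i : Fin n) (h : (i : ℕ) + 1 < n),
      d < prZ lam j i ⟨i + 1, h⟩ ∧ prZ lam j i ⟨i + 1, h⟩ < p - d)
    (t : ℕ) (a b : Fin n) (hab : (b : ℕ) = a + t) :
    |prZ lam j a b - p * t| ≤ t * (p - d - 1) := by
  induction t generalizing b with
  | zero =>
    obtain rfl : b = a := Fin.ext (by simpa using hab)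
    simp [prZ]
  | succ t ih =>
    have hc : (a : ℕ) + t + 1 < n := hab ▸ b.isLt
    set c : Fin n := ⟨a + t, by omega⟩
    have hcb : (⟨c + 1, hc⟩ : Fin n) = b := Fin.ext (by simp [c, hab]; ring)
    have hstep := hsucc c hc
    rw [hcb] at hstep
    have hstep' : |prZ lam j c b - p| ≤ p - d - 1 := by
      rw [abs_le]; constructor <;> omega
    calc |prZ lam j a b - p * ↑(t + 1)|
        = |(prZ lam j a c - p * t) + (prZ lam j c b - p)| := by
          rw [← prZ_add_prZ lam j a c b]; push_cast; ring_nf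
      _ ≤ |prZ lam j a c - p * t| + |prZ lam j c b - p| := abs_add_le _ _
      _ ≤ t * (p - d - 1) + (p - d - 1) := add_le_add (ih c rfl) hstep'
      _ = ↑(t + 1) * (p - d - 1) := by push_cast; ring

theorem abs_prZ_sub_eta0_le
    (hsucc : ∀ (i : Fin n) (h : (i : ℕ) + 1 < n),
      d < prZ lam j i ⟨i + 1, h⟩ ∧ prZ lam j i ⟨i + 1, h⟩ < p - d)
    (hdp : d < p) (a b : Fin n) :
    |prZ lam j a b - p * (eta0 n a - eta0 n b)| ≤ (n - 1) * (p - d - 1) := by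
  wlog hab : a ≤ b generalizing a b
  · rw [prZ_swap, ← abs_neg]
    convert this b a (le_of_not_ge hab) using 2
    ring
  obtain ⟨t, ht⟩ : ∃ t : ℕ, (b : ℕ) = a + t := ⟨b - a, by omega⟩
  rw [eta0_sub_eta0, show (b : ℤ) - a = t by omega]
  calc _ ≤ (t : ℤ) * (p - d - 1) := abs_prZ_sub_le_of_succ hsucc t a b ht
    _ ≤ (n - 1) * (p - d - 1) :=
        mul_le_mul_of_nonneg_right (by omega) (by omega)

end SimpleRoots

theorem sub_one_mul_le_of_forall_exists {α : Type*} [Finite α] {g : α → ℤ} {p B : ℤ}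
    (hp : 1 ≤ p) (h : ∀ x, ∃ y, p * g x ≤ B + g y) (x : α) : (p - 1) * g x ≤ B := by
  have : Nonempty α := ⟨x⟩
  obtain ⟨x₀, hx₀⟩ := Finite.exists_max g
  obtain ⟨y, hy⟩ := h x₀
  calc (p - 1) * g x ≤ (p - 1) * g x₀ := mul_le_mul_of_nonneg_left (hx₀ x) (by omega)
    _ ≤ B := by linarith [hx₀ y]

section Conjugation

variable {n f p d : ℕ} {lam μ ν : Xf n f} {σ s : WfG n f}

theorem prZ_eq_of_eq_conjX
    (h : μ + etaf n f = conjX p ν σ s (dotZ p (whElt n f) lam + etaf n f))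
    (j : Fin f) (i k : Fin n) :
    prZ μ j i k = prZ lam j (Fin.rev ((σ j)⁻¹ i)) (Fin.rev ((σ j)⁻¹ k))
      - p * (eta0 n (Fin.rev ((σ j)⁻¹ i)) - eta0 n (Fin.rev ((σ j)⁻¹ k)))
      + p * (ν j i - ν j k)
      - (ν ((finRotate f)⁻¹ j) ((conjW σ s j)⁻¹ i)
        - ν ((finRotate f)⁻¹ j) ((conjW σ s j)⁻¹ k)) := by
  have hi := congrFun (congrFun h j) i
  have hk := congrFun (congrFun h j) k
  simp only [Pi.add_apply, conjX, permAct, sh, dotZ, whElt, etaf, w0f, Fin.revPerm_symm,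
    Fin.revPerm_apply, Equiv.Perm.inv_def] at hi hk
  simp only [prZ, Equiv.Perm.inv_def]
  linarith

theorem abs_sub_le_of_eq_conjX
    (h : μ + etaf n f = conjX p ν σ s (dotZ p (whElt n f) lam + etaf n f))
    (hμ : deep p 0 μ) (hn : 2 ≤ n) (hd : 1 ≤ d) (hdp : d < p)
    (hlam : ∀ j (a b : Fin n),
      |prZ lam j a b - p * (eta0 n a - eta0 n b)| ≤ (n - 1) * (p - d - 1))
    (j : Fin f) (a b : Fin n) : |ν j a - ν j b| ≤ n - 1 := by
  have hspread : (p - 1 : ℤ) * |ν j a - ν j b| ≤ p - 1 + (n - 1) * (p - d - 1) := by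
    refine sub_one_mul_le_of_forall_exists (g := fun q : Fin f × Fin n × Fin n =>
      |ν q.1 q.2.1 - ν q.1 q.2.2|) (by omega) ?_ (j, a, b)
    rintro ⟨j, a, b⟩
    refine ⟨((finRotate f)⁻¹ j, (conjW σ s j)⁻¹ a, (conjW σ s j)⁻¹ b), ?_⟩
    have hkey := prZ_eq_of_eq_conjX h j a b
    have hμab := abs_prZ_le_of_deep hμ (by omega) j a b
    have hlamab := hlam j (Fin.rev ((σ j)⁻¹ a)) (Fin.rev ((σ j)⁻¹ b))
    calc (p : ℤ) * |ν j a - ν j b| = |p * (ν j a - ν j b)| := by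
          rw [abs_mul, Nat.abs_cast]
      _ ≤ _ := by
          have hD := abs_le.mp (le_refl |ν ((finRotate f)⁻¹ j) ((conjW σ s j)⁻¹ a)
            - ν ((finRotate f)⁻¹ j) ((conjW σ s j)⁻¹ b)|)
          rw [abs_le] at hμab hlamab ⊢
          push_cast at hμab
          constructor <;> linarith
  by_contra! hlt
  nlinarith

end Conjugation

theorem statement6_general (n f p d : ℕ) (hd : n ≤ d) (lam : Xf n f) (hdeep : deepInAlcove p d lam)
    (hres : ∀ (j : Fin f) (i : Fin n) (h : (i : ℕ) + 1 < n),
      0 < prZ lam j i ⟨(i : ℕ) + 1, h⟩ ∧ prZ lam j i ⟨(i : ℕ) + 1, h⟩ < (p : ℤ))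
    (s s' : WfG n f) (μ' : Xf n f) (hμ' : deep p 0 μ')
    (hequiv : pairEquiv p s (dotZ p (whElt n f) lam + etaf n f) s' (μ' + etaf n f)) :
    deep p (d - n + 1) μ' := by
  obtain ⟨ν, σ, -, hμeq⟩ := hequiv
  intro j i k hik
  have hn : 2 ≤ n := by have := k.isLt; rw [Fin.lt_def] at hik; omega
  have hsucc : ∀ j (a : Fin n) (h : (a : ℕ) + 1 < n),
      d < prZ lam j a ⟨a + 1, h⟩ ∧ prZ lam j a ⟨a + 1, h⟩ < p - d := fun j a h =>
    hdeep.bounds_of_pos_of_lt j (Fin.lt_def.mpr (Nat.lt_succ_self a)) (hres j a h).1 (hres j a h).2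
  have hdp : d < p := by have := hsucc j ⟨0, by omega⟩ (by simp; omega); omega
  have hν := abs_sub_le_of_eq_conjX hμeq hμ' hn (by omega) hdp
    (fun j => abs_prZ_sub_eta0_le (hsucc j) hdp)
  have hkey := prZ_eq_of_eq_conjX hμeq j i k
  set a := Fin.rev ((σ j)⁻¹ i)
  set b := Fin.rev ((σ j)⁻¹ k)
  have hab : a ≠ b := by simpa [a, b] using hik.ne
  obtain ⟨M, hM₁, hM₂⟩ := hdeep.exists_deep_residue j hab
  set D := ν ((finRotate f)⁻¹ j) ((conjW σ s j)⁻¹ i)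
    - ν ((finRotate f)⁻¹ j) ((conjW σ s j)⁻¹ k)
  have hD : |D| ≤ n - 1 := hν _ _ _
  rw [abs_le] at hD
  have hμik := hμ' j i k hik
  push_cast at hμik
  -- both sides of the congruence `hkey` modulo `p` lie in `(0, p)`
  have hcong : prZ μ' j i k - (prZ lam j a b - p * M - D) = 0 :=
    Int.eq_zero_of_abs_lt_dvd (m := p)
      ⟨ν j i - ν j k - (eta0 n a - eta0 n b) + M, by rw [hkey]; ring⟩
      (abs_sub_lt_iff.mpr ⟨by omega, by omega⟩)
  rw [Nat.cast_add, Nat.cast_sub (by omega)]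
  push_cast
  constructor <;> linarith

/-- let `λ` be d-deep in a p-restricted p-alcove with `d ≥ n`. Then
for every `s ∈ Wf` and every pair `(s', μ')` with `μ'` in `C₀` and
`(s', μ' + η) ∼ (s, w̃_h · λ + η)`, the weight `μ'` is (d − n + 1)-deep in `C₀`. -/
theorem statement6 (n f p d : ℕ) (hn : 2 ≤ n) (hf : 1 ≤ f) (hp : p.Prime) (hnp : n < p)
    (hd : n ≤ d) (lam : Xf n f) (hdeep : deepInAlcove p d lam)
    (hres : ∀ (j : Fin f) (i : Fin n) (h : (i : ℕ) + 1 < n),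
      0 < prZ lam j i ⟨(i : ℕ) + 1, h⟩ ∧ prZ lam j i ⟨(i : ℕ) + 1, h⟩ < (p : ℤ))
    (s s' : WfG n f) (μ' : Xf n f) (hμ' : deep p 0 μ')
    (hequiv : pairEquiv p s (dotZ p (whElt n f) lam + etaf n f) s' (μ' + etaf n f)) :
    deep p (d - n + 1) μ' :=
  statement6_general n f p d hd lam hdeep hres s s' μ' hμ' hequiv

end LLLSerre
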